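/- Let n = 2k+1 be odd and let c be a far-polar mapping of C_n to O_r. Then the winding number of the shortest-arc extension c^{sh} of c on the exact square C_n^{#2} is odd. -/
import Mathlib


open scoped Classical

/-- The representative in `[0, r)` of a point of the circle `O_r` (of circumference `r`),
i.e. the clockwise arc length from the base point `0`. -/
noncomputable def dlift (r : ℝ) (hr : 0 < r) (x : AddCircle r) : ℝ :=
  haveI : Fact (0 < r) := ⟨hr⟩
  ((AddCircle.equivIco r 0 x : Set.Ico (0 : ℝ) (0 + r)) : ℝ)

/-- The representative in `(-r/2, r/2]` of a point of the circle `O_r`: the signed length of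
the shortest arc from the base point (positive = clockwise). -/
noncomputable def slift (r : ℝ) (hr : 0 < r) (x : AddCircle r) : ℝ :=
  haveI : Fact (0 < r) := ⟨hr⟩
  ((AddCircle.equivIoc r (-(r / 2)) x : Set.Ioc (-(r / 2)) (-(r / 2) + r)) : ℝ)

lemma dlift_mem (r : ℝ) (hr : 0 < r) (x : AddCircle r) : dlift r hr x ∈ Set.Ico (0:ℝ) r := by
  haveI : Fact (0 < r) := ⟨hr⟩
  have := (AddCircle.equivIco r 0 x).2
  simpa [dlift] using this

lemma slift_mem (r : ℝ) (hr : 0 < r) (x : AddCircle r) :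
    slift r hr x ∈ Set.Ioc (-(r/2)) (r/2) := by
  haveI : Fact (0 < r) := ⟨hr⟩
  have := (AddCircle.equivIoc r (-(r/2)) x).2
  have e : slift r hr x = ((AddCircle.equivIoc r (-(r/2)) x :
      Set.Ioc (-(r / 2)) (-(r / 2) + r)) : ℝ) := rfl
  rw [e]
  exact ⟨this.1, by linarith [this.2]⟩

lemma coe_dlift (r : ℝ) (hr : 0 < r) (x : AddCircle r) :
    ((dlift r hr x : ℝ) : AddCircle r) = x := by
  haveI : Fact (0 < r) := ⟨hr⟩
  exact (AddCircle.equivIco r 0).symm_apply_apply x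

lemma coe_slift (r : ℝ) (hr : 0 < r) (x : AddCircle r) :
    ((slift r hr x : ℝ) : AddCircle r) = x := by
  haveI : Fact (0 < r) := ⟨hr⟩
  exact (AddCircle.equivIoc r (-(r/2))).symm_apply_apply x

lemma sub_eq_int_mul (r : ℝ) (hr : 0 < r) {u v : ℝ}
    (h : (u : AddCircle r) = (v : AddCircle r)) : ∃ m : ℤ, u - v = m * r := by
  have h0 : ((u - v : ℝ) : AddCircle r) = 0 := by
    rw [AddCircle.coe_sub, h, sub_self]
  obtain ⟨m, hm⟩ := (AddCircle.coe_eq_zero_iff r).mp h0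
  exact ⟨m, by rw [← hm]; simp [zsmul_eq_mul]⟩

lemma int_bound_lt {r : ℝ} (hr : 0 < r) {m q : ℤ} (h : (m:ℝ) * r < q * r) : m < q := by
  have : (m:ℝ) < q := lt_of_mul_lt_mul_right (by linarith) hr.le
  exact_mod_cast this



/-- A mapping `c` of the vertices of the cycle `C_n` to the circle `O_r` is far-polar if for
each `i` the points `c (i-1)` and `c (i+1)` partition `O_r` into two arcs of unequal lengths
and `c i` lies strictly inside the larger arc.  Here `dlift r hr (c (i+1) - c (i-1))` is the
length of the clockwise arc from `c (i-1)` to `c (i+1)`. -/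
def FarPolarCycle (n : ℕ) (r : ℝ) (hr : 0 < r) (c : ZMod n → AddCircle r) : Prop :=
  ∀ i : ZMod n,
    dlift r hr (c (i + 1) - c (i - 1)) ≠ r / 2 ∧
    (if r / 2 < dlift r hr (c (i + 1) - c (i - 1)) then
      0 < dlift r hr (c i - c (i - 1)) ∧
        dlift r hr (c i - c (i - 1)) < dlift r hr (c (i + 1) - c (i - 1))
    else
      dlift r hr (c (i + 1) - c (i - 1)) < dlift r hr (c i - c (i - 1)))

lemma aux_winding (n : ℕ) (hodd : Odd n) (r : ℝ) (hr : 0 < r)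
    (c : ZMod n → AddCircle r) (hc : FarPolarCycle n r hr c) :
    ∃ z : ℤ, Odd z ∧
      (∑ j ∈ Finset.range n,
          slift r hr
            (c ((2 * j + 2 : ℕ) : ZMod n) - c ((2 * j : ℕ) : ZMod n)))
        = z * r := by
  haveI : Fact (0 < r) := ⟨hr⟩
  obtain ⟨K, hK⟩ := hodd
  haveI : NeZero n := ⟨by omega⟩
  set a : ZMod n → ℝ := fun i => dlift r hr (c (i + 1) - c i) with ha
  -- Step 1: pointwise formula
  have hstep : ∀ i : ZMod n,
      slift r hr (c (i + 1) - c (i - 1)) = a (i - 1) + a i - r := by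
    intro i
    obtain ⟨hne, hcond⟩ := hc i
    set d := dlift r hr (c (i + 1) - c (i - 1)) with hd
    set s := slift r hr (c (i + 1) - c (i - 1)) with hs
    have hai1 : a (i - 1) = dlift r hr (c i - c (i - 1)) := by
      simp only [ha, sub_add_cancel]
    set p := dlift r hr (c i - c (i - 1)) with hp
    set q := a i with hq
    have hqd : q = dlift r hr (c (i + 1) - c i) := rfl
    have hdm := dlift_mem r hr (c (i + 1) - c (i - 1))
    have hpm := dlift_mem r hr (c i - c (i - 1))
    have hqm := dlift_mem r hr (c (i + 1) - c i)
    rw [← hp] at hpm; rw [← hqd] at hqm; rw [← hd] at hdm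
    have hsm := slift_mem r hr (c (i + 1) - c (i - 1))
    rw [← hs] at hsm
    obtain ⟨hd0, hd1⟩ := hdm
    obtain ⟨hp0, hp1⟩ := hpm
    obtain ⟨hq0, hq1⟩ := hqm
    obtain ⟨hs0, hs1⟩ := hsm
    obtain ⟨m1, hm1⟩ : ∃ m : ℤ, s - d = m * r := by
      apply sub_eq_int_mul r hr
      rw [hs, hd, coe_slift, coe_dlift]
    obtain ⟨m2, hm2⟩ : ∃ m : ℤ, (p + q) - d = m * r := by
      apply sub_eq_int_mul r hr
      rw [AddCircle.coe_add, hp, hqd, hd, coe_dlift, coe_dlift, coe_dlift]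
      abel
    rw [hai1]
    by_cases hcase : r / 2 < d
    · rw [if_pos hcase] at hcond
      obtain ⟨hc1, hc2⟩ := hcond
      have hm1v : m1 = -1 := by
        have hlt : m1 < 0 := by
          apply int_bound_lt hr; push_cast; linarith
        have hgt : (-2 : ℤ) < m1 := by
          apply int_bound_lt hr; push_cast; linarith
        omega
      have hm2v : m2 = 0 := by
        have hlt : m2 < 2 := by
          apply int_bound_lt hr; push_cast; linarith
        have hgt : (-1 : ℤ) < m2 := by
          apply int_bound_lt hr; push_cast; linarith
        have hne1 : m2 ≠ 1 := by
          intro h1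
          rw [h1] at hm2; push_cast at hm2
          linarith
        omega
      rw [hm1v] at hm1; rw [hm2v] at hm2
      push_cast at hm1 hm2
      linarith
    · rw [if_neg hcase] at hcond
      have hdlt : d < r / 2 := lt_of_le_of_ne (not_lt.mp hcase) (by rw [hd] at hne ⊢; exact hne)
      have hm1v : m1 = 0 := by
        have hlt : m1 < 1 := by
          apply int_bound_lt hr; push_cast; linarith
        have hgt : (-1 : ℤ) < m1 := by
          apply int_bound_lt hr; push_cast; linarith
        omega
      have hm2v : m2 = 1 := by
        have hlt : m2 < 2 := by
          apply int_bound_lt hr; push_cast; linarith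
        have hgt : (0 : ℤ) < m2 := by
          apply int_bound_lt hr; push_cast; linarith
        omega
      rw [hm1v] at hm1; rw [hm2v] at hm2
      push_cast at hm1 hm2
      linarith
  -- Step 2: the total winding of the basic cycle
  set S : ℝ := ∑ i : ZMod n, a i with hS
  obtain ⟨t, ht⟩ : ∃ t : ℤ, S = t * r := by
    have h0 : ((S : ℝ) : AddCircle r) = ((0 : ℝ) : AddCircle r) := by
      rw [hS]
      have h1 : ((∑ i : ZMod n, a i : ℝ) : AddCircle r)
          = ∑ i : ZMod n, ((a i : ℝ) : AddCircle r) :=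
        map_sum (QuotientAddGroup.mk' (AddSubgroup.zmultiples r)) _ _
      rw [h1]
      have h2 : ∀ i : ZMod n, ((a i : ℝ) : AddCircle r) = c (i + 1) - c i := fun i =>
        coe_dlift r hr _
      rw [Finset.sum_congr rfl fun i _ => h2 i, Finset.sum_sub_distrib,
        Fintype.sum_equiv (Equiv.addRight (1 : ZMod n)) (fun i => c (i + 1)) c fun i => rfl]
      simp
    obtain ⟨m, hm⟩ := sub_eq_int_mul r hr h0
    exact ⟨m, by linarith [hm]⟩
  -- Step 3: reindexing sums over range n via ZMod n
  have hrange : ∀ f : ZMod n → ℝ,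
      ∑ j ∈ Finset.range n, f ((j : ℕ) : ZMod n) = ∑ i : ZMod n, f i := by
    intro f
    refine Finset.sum_nbij' (fun j => ((j : ZMod n))) (fun i => i.val) ?_ ?_ ?_ ?_ ?_
    · intro x _; exact Finset.mem_univ _
    · intro i _; exact Finset.mem_range.mpr (ZMod.val_lt i)
    · intro j hj; exact ZMod.val_cast_of_lt (Finset.mem_range.mp hj)
    · intro i _; exact ZMod.natCast_zmod_val i
    · intro j _; rfl
  have hcop : Nat.Coprime 2 n := Nat.coprime_two_left.mpr ⟨K, by omega⟩
  set u : (ZMod n)ˣ := ZMod.unitOfCoprime 2 hcop with hu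
  have hu2 : (u : ZMod n) = 2 := by
    rw [hu, ZMod.coe_unitOfCoprime]; push_cast; ring
  have hb1 : ∑ j ∈ Finset.range n, a ((2 * j : ℕ) : ZMod n) = S := by
    have e1 : ∑ j ∈ Finset.range n, a ((2 * j : ℕ) : ZMod n)
        = ∑ j ∈ Finset.range n, (fun x : ZMod n => a (2 * x)) ((j : ℕ) : ZMod n) :=
      Finset.sum_congr rfl fun j _ => by simp only []; congr 1; push_cast; ring
    rw [e1, hrange (fun x : ZMod n => a (2 * x)), hS]
    exact Fintype.sum_equiv (Units.mulLeft u) _ _ fun i => by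
      simp only [Units.mulLeft_apply, hu2]
  have hb2 : ∑ j ∈ Finset.range n, a ((2 * j + 1 : ℕ) : ZMod n) = S := by
    have e1 : ∑ j ∈ Finset.range n, a ((2 * j + 1 : ℕ) : ZMod n)
        = ∑ j ∈ Finset.range n, (fun x : ZMod n => a (2 * x + 1)) ((j : ℕ) : ZMod n) :=
      Finset.sum_congr rfl fun j _ => by simp only []; congr 1; push_cast; ring
    rw [e1, hrange (fun x : ZMod n => a (2 * x + 1)), hS]
    exact Fintype.sum_equiv ((Units.mulLeft u).trans (Equiv.addRight 1)) _ _ fun i => by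
      simp only [Equiv.trans_apply, Units.mulLeft_apply, Equiv.coe_addRight, hu2]
  -- Step 4: rewrite each term of the goal sum
  have hterm : ∀ j : ℕ,
      slift r hr (c ((2 * j + 2 : ℕ) : ZMod n) - c ((2 * j : ℕ) : ZMod n))
        = a ((2 * j : ℕ) : ZMod n) + a ((2 * j + 1 : ℕ) : ZMod n) - r := by
    intro j
    have h1 : ((2 * j + 2 : ℕ) : ZMod n) = ((2 * j + 1 : ℕ) : ZMod n) + 1 := by
      push_cast; ring
    have h2 : ((2 * j : ℕ) : ZMod n) = ((2 * j + 1 : ℕ) : ZMod n) - 1 := by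
      push_cast; ring
    have h3 : ((2 * j + 1 : ℕ) : ZMod n) - 1 = ((2 * j : ℕ) : ZMod n) := h2.symm
    rw [h1, h2, hstep, h3]
  rw [Finset.sum_congr rfl fun j _ => hterm j]
  rw [Finset.sum_sub_distrib, Finset.sum_add_distrib, hb1, hb2, Finset.sum_const,
    Finset.card_range, nsmul_eq_mul]
  refine ⟨2 * t - n, ⟨t - (K + 1), by push_cast [hK]; ring⟩, ?_⟩
  rw [ht]
  push_cast [hK]
  ring


/-- Let `n = 2k+1` be odd and `c` a far-polar mapping of `C_n` to `O_r`.  The exact square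
`C_n^{#2}` is the cycle visiting `c 0, c 2, c 4, …`; the winding number of its shortest-arc
extension, i.e. the integer `z` with `∑ slift = z * r`, is odd. -/
theorem windingOdd_farPolar_oddCycle (k : ℕ) (hk : 1 ≤ k) (r : ℝ) (hr : 0 < r)
    (c : ZMod (2 * k + 1) → AddCircle r) (hc : FarPolarCycle (2 * k + 1) r hr c) :
    ∃ z : ℤ, Odd z ∧
      (∑ j ∈ Finset.range (2 * k + 1),
          slift r hr
            (c ((2 * j + 2 : ℕ) : ZMod (2 * k + 1)) - c ((2 * j : ℕ) : ZMod (2 * k + 1))))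
        = z * r :=
  aux_winding (2 * k + 1) ⟨k, by ring⟩ r hr c hc
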